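/- Let G be a finite simple graph on a vertex set V without isolated vertices, let 𝓛 be its normalized Laplacian, let ω ≥ 0, and let PW_ω(G) be the corresponding Paley–Wiener space. Suppose U ⊆ V is a uniqueness set for PW_ω(G), i.e., any two functions in PW_ω(G) agreeing at every vertex of U are equal. Then there exists a family of functions (Θ_u)_{u∈U} with each Θ_u ∈ PW_ω(G) such that every f ∈ PW_ω(G) satisfies the reconstruction formula f(v) = ∑_{u∈U} f(u)·Θ_u(v) for all v ∈ V. -/

import Mathlib

/-- The normalized Laplacian of a finite simple graph as a linear endomorphism of `V → ℂ`:
`(𝓛 f) v = f v − ∑_{u ∼ v} f u / √(d u · d v)`. -/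
noncomputable def nLapL {V : Type*} [Fintype V] (G : SimpleGraph V) [DecidableRel G.Adj] :
    (V → ℂ) →ₗ[ℂ] (V → ℂ) where
  toFun f := fun v =>
    f v - ∑ u ∈ G.neighborFinset v, f u / (Real.sqrt ((G.degree u : ℝ) * (G.degree v : ℝ)) : ℂ)
  map_add' f g := by
    funext v
    simp only [Pi.add_apply, add_div, Finset.sum_add_distrib]
    ring
  map_smul' a f := by
    funext v
    simp only [Pi.smul_apply, smul_eq_mul, RingHom.id_apply, mul_sub, Finset.mul_sum,
      mul_div_assoc]

/-- The Paley–Wiener space `PW_ω(G)`: the span (supremum) of the eigenspaces of the normalized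
Laplacian corresponding to (real) eigenvalues `μ ≤ ω`. -/
noncomputable def PW {V : Type*} [Fintype V] (G : SimpleGraph V) [DecidableRel G.Adj] (ω : ℝ) :
    Submodule ℂ (V → ℂ) :=
  ⨆ μ : ℝ, ⨆ _ : μ ≤ ω, Module.End.eigenspace (nLapL G) (μ : ℂ)

/-!
Restricting functions to `U` is a linear map on `PW_ω(G)` which, by the uniqueness hypothesis, is
injective; so it has a linear left inverse `L`. Since `V` is finite, so is `U`, and expanding the
restriction of `f` in the standard basis of `U → ℂ` gives `f = ∑_{u ∈ U} f(u) · L(δ_u)`, i.e.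
`Θ_u = L(δ_u)`.
-/

section Reconstruction

variable {K V : Type*} [Field K] (E : Submodule K (V → K)) (U : Set V)

def Submodule.restrictTo : E →ₗ[K] (U → K) :=
  (LinearMap.funLeft K K ((↑) : U → V)).comp E.subtype

theorem Submodule.restrictTo_injective
    (hU : ∀ f ∈ E, ∀ g ∈ E, (∀ u ∈ U, f u = g u) → f = g) :
    Function.Injective (E.restrictTo U) := fun f g hfg =>
  Subtype.ext <| hU f f.2 g g.2 fun u hu => congr_fun hfg ⟨u, hu⟩

theorem Submodule.exists_reconstruction_of_restrictTo_injective [TopologicalSpace K] [Finite U]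
    (hinj : Function.Injective (E.restrictTo U)) :
    ∃ Θ : U → (V → K), (∀ u, Θ u ∈ E) ∧ ∀ f ∈ E, ∀ v, f v = ∑' u : U, f u * Θ u v := by
  classical
  have : Fintype U := Fintype.ofFinite U
  obtain ⟨L, hL⟩ := (E.restrictTo U).exists_leftInverse_of_injective (LinearMap.ker_eq_bot.2 hinj)
  refine ⟨fun u => L fun w => if u = w then 1 else 0, fun u => Subtype.prop _, fun f hf v => ?_⟩
  have hrecon : (⟨f, hf⟩ : E) = L (E.restrictTo U ⟨f, hf⟩) := (LinearMap.congr_fun hL _).symm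
  rw [LinearMap.pi_apply_eq_sum_univ] at hrecon
  rw [tsum_fintype]
  simpa [Submodule.restrictTo] using congr_fun (congr_arg Subtype.val hrecon) v

end Reconstruction

theorem uniqueness_set_reconstruction {V : Type*} [Fintype V] (G : SimpleGraph V)
    [DecidableRel G.Adj] (ω : ℝ)
    (U : Set V)
    (hU : ∀ f ∈ PW G ω, ∀ g ∈ PW G ω, (∀ u ∈ U, f u = g u) → f = g) :
    ∃ Θ : U → (V → ℂ), (∀ u : U, Θ u ∈ PW G ω) ∧
      ∀ f ∈ PW G ω, ∀ v : V, f v = ∑' u : U, f u * Θ u v :=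
  (PW G ω).exists_reconstruction_of_restrictTo_injective U
    ((PW G ω).restrictTo_injective U hU)
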